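/- Assume ρ(β^j) ≠ 0 for every j ∈ Z/(q^m−1)Z. Let r ∈ F^L, let (S_0,…,S_{t−1}) = rH^T, and set S(x) = Σ_{i=0}^{t−1} S_i x^i ∈ F[x]. For each l ∈ L, let p_l(x) ∈ F[x] be the common minimal polynomial over F of the elements β^{−j} for j ∈ l. Suppose e ∈ F^L satisfies 2·deg e ≤ t and r − e ∈ C(ρ,t), and suppose (λ, ω) ∈ F[x]² satisfies λ(0) = 1, gcd(λ, ω) = 1, deg ω < deg λ, 2·deg λ ≤ t, and λ(x)S(x) ≡ ω(x) (mod x^t). Then {l ∈ L : p_l(x) divides λ(x)} = {l ∈ L : e_l ≠ 0}, and in the field of rational functions E(x) one has ω(x)/λ(x) = Σ_{l : e_l ≠ 0} e_l · Σ_{j∈l} ρ(β^j)/(1 − β^j x). -/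

import Mathlib

open Polynomial

noncomputable section

/-- The orbit of `j : ZMod N` under multiplication by `q`. -/
def qOrbit (N q : ℕ) (j : ZMod N) : Set (ZMod N) :=
  Set.range fun k : ℕ => (q : ZMod N) ^ k * j

/-- The set `L` of orbits of `ZMod N` under multiplication by `q`. -/
def orbitSet (N q : ℕ) : Set (Set (ZMod N)) :=
  {l | ∃ j : ZMod N, l = qOrbit N q j}

/-- `β ^ j` for a residue class `j`. -/
def bpow {E : Type*} [Monoid E] {N : ℕ} (β : E) (j : ZMod N) : E :=
  β ^ j.val

/-- The check-matrix entry `h_{i l} = ∑_{j ∈ l} ρ(β^j) β^{i j}`, as an element of `E`. -/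
def hEntry {F E : Type*} [CommSemiring F] [CommSemiring E] [Algebra F E] {N : ℕ}
    (β : E) (ρ : Polynomial F) (i : ℕ) (l : Set (ZMod N)) : E :=
  ∑ᶠ j ∈ l, Polynomial.aeval (bpow β j) ρ * bpow β j ^ i

/-- The code `C(ρ, t)` inside `F^L`. -/
def codeSet (F E : Type*) [Field F] [Field E] [Algebra F E] (N q : ℕ)
    (β : E) (ρ : Polynomial F) (t : ℕ) : Set (↥(orbitSet N q) → F) :=
  {c | ∀ i < t, ∑ᶠ l : orbitSet N q,
    algebraMap F E (c l) * hEntry β ρ i (l : Set (ZMod N)) = 0}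

open scoped Classical in
/-- `deg c = ∑_{l : c_l ≠ 0} |l|`. -/
def wdeg {F : Type*} [Zero F] {N q : ℕ} (c : ↥(orbitSet N q) → F) : ℕ :=
  ∑ᶠ l : orbitSet N q, if c l ≠ 0 then (l : Set (ZMod N)).ncard else 0

/-!
Lift `e` along the orbit map `j ↦ [j]` to `ε j = e [j]`, and let `J` be its support, so that
`|J| = deg e` and, since `r - e` is a codeword, `S_i = ∑_{j ∈ J} c_j (β^j)^i` with
`c_j = ε_j ρ(β^j) ≠ 0`. The error locator `Λ = ∏_{j ∈ J} (1 - β^j x)` and the error evaluator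
`Ω = ∑_j c_j ∏_{j' ≠ j} (1 - β^{j'} x)` solve the key equation `Λ S ≡ Ω (mod x^t)`. For any
solution `(λ, ω)`, cross-multiplying gives `λ Ω ≡ Λ ω (mod x^t)`, and both sides have degree
`< t`, so `λ Ω = Λ ω`. Both pairs are coprime (modulo `1 - β^j x`, `Ω` is congruent to
`c_j ∏_{j' ≠ j} (1 - β^{j'} x)`), hence `λ` and `Λ` are associated, and equal because both
have constant term `1`; then `ω = Ω`.
The roots of `Λ` are the `β^{-j}`, `j ∈ J`, which gives the divisibility criterion, and
`Ω / Λ = ∑_j c_j / (1 - β^j x)` is the partial fraction decomposition.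
-/

theorem Finset.sum_mul_prod_erase_div_prod {K ι : Type*} [Field K] [DecidableEq ι]
    (J : Finset ι) (c x : ι → K) (hx : ∀ j ∈ J, x j ≠ 0) :
    (∑ j ∈ J, c j * ∏ j' ∈ J.erase j, x j') / ∏ j ∈ J, x j = ∑ j ∈ J, c j / x j := by
  rw [Finset.sum_div]
  refine Finset.sum_congr rfl fun j hj => ?_
  have hrest : ∏ j' ∈ J.erase j, x j' ≠ 0 :=
    Finset.prod_ne_zero_iff.2 fun j' hj' => hx j' (Finset.mem_of_mem_erase hj')
  rw [← Finset.mul_prod_erase J x hj, mul_comm (x j), ← div_div, mul_div_cancel_right₀ _ hrest]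

namespace Polynomial

theorem degree_mul_lt_of_natDegree_add_le {R : Type*} [Semiring R] {p q : R[X]} {n t : ℕ}
    (hq : q.degree < n) (h : p.natDegree + n ≤ t) : (p * q).degree < t := by
  rcases eq_or_ne q 0 with rfl | hq0
  · simp
  have hqn : q.natDegree < n := (natDegree_lt_iff_degree_lt hq0).2 hq
  exact degree_le_natDegree.trans_lt
    (by exact_mod_cast (natDegree_mul_le).trans_lt (by omega : p.natDegree + q.natDegree < t))

theorem mul_eq_mul_of_X_pow_dvd_sub {R : Type*} [CommRing R] [IsDomain R]
    {a b c d S : R[X]} {t : ℕ} (hab : X ^ t ∣ a * S - b) (hcd : X ^ t ∣ c * S - d)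
    (had : (a * d).degree < t) (hcb : (c * b).degree < t) : a * d = c * b := by
  have hdvd : X ^ t ∣ c * b - a * d := by
    convert dvd_sub (hcd.mul_left a) (hab.mul_left c) using 1
    ring
  refine (sub_eq_zero.1 (eq_zero_of_dvd_of_degree_lt hdvd ?_)).symm
  rw [degree_X_pow]
  exact (degree_sub_le _ _).trans_lt (max_lt hcb had)

theorem eq_of_associated_of_coeff_zero_eq_one {R : Type*} [CommRing R] [IsDomain R]
    {p q : R[X]} (h : Associated p q) (hp : p.coeff 0 = 1) (hq : q.coeff 0 = 1) : p = q := by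
  obtain ⟨u, rfl⟩ := h
  obtain ⟨a, -, ha⟩ := Polynomial.isUnit_iff.1 u.isUnit
  rw [← ha, coeff_mul_C, hp, one_mul] at hq
  rw [← ha, hq, C_1, mul_one]

theorem isCoprime_one_sub_C_mul_X {K : Type*} [Field K] {a b : K} (h : a ≠ b) :
    IsCoprime (1 - C a * X) (1 - C b * X) := by
  have hab : C b * (1 - C a * X) + C (-a) * (1 - C b * X) = C (b - a) := by
    simp only [map_neg, map_sub]
    ring
  refine ⟨C (b - a)⁻¹ * C b, C (b - a)⁻¹ * C (-a), ?_⟩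
  rw [mul_assoc, mul_assoc, ← mul_add, hab, ← C_mul, inv_mul_cancel₀ (sub_ne_zero.2 h.symm), C_1]

section KeyEquation

variable {K ι : Type*} [Field K] (J : Finset ι) (b c : ι → K)

def errorLocator : K[X] :=
  ∏ j ∈ J, (1 - C (b j) * X)

theorem errorLocator_coeff_zero : (errorLocator J b).coeff 0 = 1 := by
  simp [errorLocator, coeff_zero_eq_eval_zero, eval_prod]

theorem errorLocator_ne_zero : errorLocator J b ≠ 0 := fun h => by
  simpa [h] using errorLocator_coeff_zero J b

theorem natDegree_errorLocator_le : (errorLocator J b).natDegree ≤ J.card := by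
  refine (natDegree_prod_le _ _).trans ?_
  exact (Finset.sum_le_card_nsmul _ _ 1 fun j _ => by compute_degree).trans_eq (by simp)

theorem eval_inv_errorLocator_eq_zero_iff {a : K} (ha : a ≠ 0) :
    (errorLocator J b).eval a⁻¹ = 0 ↔ ∃ j ∈ J, b j = a := by
  simp [errorLocator, eval_prod, Finset.prod_eq_zero_iff, sub_eq_zero, eq_comm (a := (1 : K)),
    mul_inv_eq_one₀ ha]

variable [DecidableEq ι]

def errorEvaluator : K[X] :=
  ∑ j ∈ J, C (c j) * errorLocator (J.erase j) b

theorem degree_errorEvaluator_lt : (errorEvaluator J b c).degree < J.card := by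
  refine (degree_sum_le _ _).trans_lt ((Finset.sup_lt_iff (WithBot.bot_lt_coe _)).2 fun j hj => ?_)
  refine degree_le_natDegree.trans_lt (WithBot.coe_lt_coe.2 ?_)
  calc (C (c j) * errorLocator (J.erase j) b).natDegree
      ≤ (J.erase j).card := (natDegree_C_mul_le _ _).trans (natDegree_errorLocator_le _ _)
    _ < J.card := Finset.card_erase_lt_of_mem hj

theorem X_pow_dvd_errorLocator_mul_sub_errorEvaluator {S : K[X]} {t : ℕ}
    (hS : ∀ i < t, S.coeff i = ∑ j ∈ J, c j * b j ^ i) :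
    X ^ t ∣ errorLocator J b * S - errorEvaluator J b c := by
  set G : K[X] := ∑ j ∈ J, C (c j) * ∑ i ∈ Finset.range t, (C (b j) * X) ^ i
  have hSG : X ^ t ∣ S - G := X_pow_dvd_iff.2 fun d hd => by
    simp [G, hS d hd, finsetSum_coeff, mul_pow, ← C_pow, hd, -map_pow]
  have hGΩ : X ^ t ∣ errorLocator J b * G - errorEvaluator J b c := by
    rw [Finset.mul_sum, errorEvaluator, ← Finset.sum_sub_distrib]
    refine Finset.dvd_sum fun j hj => ⟨-(C (c j) * C (b j) ^ t * errorLocator (J.erase j) b), ?_⟩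
    rw [errorLocator, ← Finset.mul_prod_erase J _ hj, ← errorLocator]
    linear_combination (C (c j) * errorLocator (J.erase j) b) *
      geom_sum_mul_neg (C (b j) * X) t
  rw [show errorLocator J b * S - errorEvaluator J b c
    = errorLocator J b * (S - G) + (errorLocator J b * G - errorEvaluator J b c) by ring]
  exact dvd_add (dvd_mul_of_dvd_right hSG _) hGΩ

variable {J b c}

theorem isCoprime_errorLocator_errorEvaluator (hb : Set.InjOn b J) (hc : ∀ j ∈ J, c j ≠ 0) :
    IsCoprime (errorLocator J b) (errorEvaluator J b c) := by
  refine IsCoprime.prod_left fun j hj => ?_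
  have hfar : 1 - C (b j) * X ∣ ∑ j' ∈ J.erase j, C (c j') * errorLocator (J.erase j') b :=
    Finset.dvd_sum fun j' hj' => dvd_mul_of_dvd_right (Finset.dvd_prod_of_mem _
      (Finset.mem_erase.2 ⟨(Finset.ne_of_mem_erase hj').symm, hj⟩)) _
  obtain ⟨R, hR⟩ := hfar
  rw [errorEvaluator, ← Finset.add_sum_erase J _ hj, hR, IsCoprime.add_mul_left_right_iff,
    isCoprime_mul_unit_left_right (isUnit_C.2 (hc j hj).isUnit)]
  refine IsCoprime.prod_right fun j' hj' => isCoprime_one_sub_C_mul_X fun h => ?_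
  exact Finset.ne_of_mem_erase hj' (hb (Finset.mem_of_mem_erase hj') hj h.symm)

theorem eq_errorLocator_of_key_equation (hb : Set.InjOn b J) (hc : ∀ j ∈ J, c j ≠ 0)
    {S : K[X]} {t : ℕ} (hS : ∀ i < t, S.coeff i = ∑ j ∈ J, c j * b j ^ i) (hJ : 2 * J.card ≤ t)
    {lam om : K[X]} (hlam0 : lam.coeff 0 = 1) (hcop : IsCoprime lam om)
    (hdeg : om.degree < lam.degree) (hlamt : 2 * lam.natDegree ≤ t)
    (hkey : X ^ t ∣ lam * S - om) :
    lam = errorLocator J b ∧ om = errorEvaluator J b c := by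
  have hcross : lam * errorEvaluator J b c = errorLocator J b * om :=
    mul_eq_mul_of_X_pow_dvd_sub hkey (X_pow_dvd_errorLocator_mul_sub_errorEvaluator J b c hS)
      (degree_mul_lt_of_natDegree_add_le (degree_errorEvaluator_lt J b c) (by omega))
      (degree_mul_lt_of_natDegree_add_le (hdeg.trans_le degree_le_natDegree)
        (by linarith [natDegree_errorLocator_le J b]))
  have hdvd : lam ∣ errorLocator J b :=
    hcop.dvd_of_dvd_mul_right (hcross ▸ dvd_mul_right _ _)
  have hdvd' : errorLocator J b ∣ lam :=
    (isCoprime_errorLocator_errorEvaluator hb hc).dvd_of_dvd_mul_right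
      (hcross ▸ dvd_mul_right _ _)
  have hlam : lam = errorLocator J b := eq_of_associated_of_coeff_zero_eq_one
    (associated_of_dvd_dvd hdvd hdvd') hlam0 (errorLocator_coeff_zero J b)
  subst hlam
  exact ⟨rfl, (mul_left_cancel₀ (errorLocator_ne_zero J b) hcross).symm⟩

theorem algebraMap_errorEvaluator_div_errorLocator {L : Type*} [Field L] [Algebra K[X] L]
    [FaithfulSMul K[X] L] :
    algebraMap K[X] L (errorEvaluator J b c) / algebraMap K[X] L (errorLocator J b) =
      ∑ j ∈ J, algebraMap K[X] L (C (c j)) / algebraMap K[X] L (1 - C (b j) * X) := by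
  simp only [errorEvaluator, errorLocator, map_sum, map_mul, map_prod]
  refine Finset.sum_mul_prod_erase_div_prod _ _ _ fun j _ =>
    (map_ne_zero_iff _ (FaithfulSMul.algebraMap_injective _ _)).2 fun h => ?_
  simpa using congrArg (coeff · 0) h

end KeyEquation

theorem minpoly_inv_dvd_iff_mem {F E ι : Type*} [Field F] [Field E] [Algebra F E]
    {J : Finset ι} {b : ι → E} (hb : Function.Injective b) (hb0 : ∀ i, b i ≠ 0) {lam : F[X]}
    (hlam : lam.map (algebraMap F E) = errorLocator J b) (i : ι) :
    minpoly F (b i)⁻¹ ∣ lam ↔ i ∈ J := by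
  rw [minpoly.dvd_iff, aeval_def, ← eval_map, hlam, eval_inv_errorLocator_eq_zero_iff _ _ (hb0 i)]
  simp [hb.eq_iff]

end Polynomial

section Orbits

variable {N q m : ℕ}

theorem mem_qOrbit_self (j : ZMod N) : j ∈ qOrbit N q j :=
  ⟨0, by simp⟩

theorem qOrbit_eq_of_mem (hm : 0 < m) (hq : (q : ZMod N) ^ m = 1) {j j' : ZMod N}
    (h : j' ∈ qOrbit N q j) : qOrbit N q j' = qOrbit N q j := by
  obtain ⟨k, rfl⟩ := h
  obtain ⟨n, rfl⟩ := Nat.exists_eq_add_one_of_ne_zero hm.ne'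
  ext x
  constructor
  · rintro ⟨i, rfl⟩
    exact ⟨i + k, by simp only [pow_add]; ring⟩
  · rintro ⟨i, rfl⟩
    refine ⟨i + n * k, ?_⟩
    calc (q : ZMod N) ^ (i + n * k) * ((q : ZMod N) ^ k * j)
        = (q : ZMod N) ^ i * ((q : ZMod N) ^ (n + 1)) ^ k * j := by ring
      _ = (q : ZMod N) ^ i * j := by rw [hq, one_pow, mul_one]

def orbitOf (N q : ℕ) (j : ZMod N) : orbitSet N q :=
  ⟨qOrbit N q j, j, rfl⟩

theorem orbitOf_eq_of_mem (hm : 0 < m) (hq : (q : ZMod N) ^ m = 1) {l : orbitSet N q}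
    {j : ZMod N} (h : j ∈ (l : Set (ZMod N))) : orbitOf N q j = l := by
  obtain ⟨_, j₀, rfl⟩ := l
  exact Subtype.ext (qOrbit_eq_of_mem hm hq h)

theorem finsum_orbitSet_mul_finsum_mem [NeZero N] (hm : 0 < m) (hq : (q : ZMod N) ^ m = 1)
    {R : Type*} [NonUnitalNonAssocSemiring R] (a : orbitSet N q → R) (g : ZMod N → R) :
    ∑ᶠ l : orbitSet N q, a l * ∑ᶠ j ∈ (l : Set (ZMod N)), g j =
      ∑ j, a (orbitOf N q j) * g j := by
  have hdisj : Pairwise (Function.onFun Disjoint fun l : orbitSet N q => (l : Set (ZMod N))) :=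
    fun l l' hne => Set.disjoint_left.2 fun j hj hj' =>
      hne ((orbitOf_eq_of_mem hm hq hj).symm.trans (orbitOf_eq_of_mem hm hq hj'))
  have hcover : (⋃ l : orbitSet N q, (l : Set (ZMod N))) = Set.univ :=
    Set.eq_univ_of_forall fun j => Set.mem_iUnion.2 ⟨orbitOf N q j, mem_qOrbit_self j⟩
  rw [← finsum_eq_sum_of_fintype, ← finsum_mem_univ (fun j => a (orbitOf N q j) * g j), ← hcover,
    finsum_mem_iUnion hdisj fun _ => Set.toFinite _]
  refine finsum_congr fun l => ?_
  rw [mul_finsum_mem' _ _ (Set.toFinite _)]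
  exact finsum_mem_congr rfl fun j hj => by rw [orbitOf_eq_of_mem hm hq hj]

theorem forall_mem_orbitSet_iff (hm : 0 < m) (hq : (q : ZMod N) ^ m = 1)
    {P : orbitSet N q → Prop} (l : orbitSet N q) :
    (∀ j ∈ (l : Set (ZMod N)), P (orbitOf N q j)) ↔ P l := by
  obtain ⟨_, j₀, rfl⟩ := l
  exact ⟨fun h => h j₀ (mem_qOrbit_self j₀), fun h j hj => orbitOf_eq_of_mem hm hq hj ▸ h⟩
end Orbits

theorem ZMod.natCast_pow_eq_one_of_one_le {q m : ℕ} (h : 1 ≤ q ^ m) :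
    (q : ZMod (q ^ m - 1)) ^ m = 1 := by
  have hN := ZMod.natCast_self (q ^ m - 1)
  rw [Nat.cast_sub h] at hN
  push_cast at hN
  linear_combination hN

section Decoding

variable {N q m : ℕ} [NeZero N]

theorem bpow_injective {M : Type*} [Monoid M] {β : M} (hβ : orderOf β = N) :
    Function.Injective (bpow β : ZMod N → M) := fun x y h =>
  ZMod.val_injective N (pow_injOn_Iio_orderOf (hβ ▸ ZMod.val_lt x) (hβ ▸ ZMod.val_lt y) h)

open scoped Classical in
theorem wdeg_eq_card (hm : 0 < m) (hq : (q : ZMod N) ^ m = 1) {F : Type*} [Zero F]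
    (e : orbitSet N q → F) :
    wdeg e = (Finset.univ.filter fun j => e (orbitOf N q j) ≠ 0).card := by
  have hterm : ∀ l : orbitSet N q, (if e l ≠ 0 then (l : Set (ZMod N)).ncard else 0) =
      (if e l ≠ 0 then 1 else 0) * ∑ᶠ j ∈ (l : Set (ZMod N)), 1 := fun l => by
    rw [finsum_one]
    split_ifs <;> simp
  rw [wdeg, finsum_congr hterm, finsum_orbitSet_mul_finsum_mem hm hq, Finset.card_filter]
  simp

open scoped Classical in
theorem finsum_mul_hEntry_eq_sum_error (hm : 0 < m) (hq : (q : ZMod N) ^ m = 1)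
    {F E : Type*} [Field F] [Field E] [Algebra F E] {β : E} {ρ : F[X]} {t i : ℕ}
    {r e : orbitSet N q → F} (hre : r - e ∈ codeSet F E N q β ρ t) (hi : i < t) :
    ∑ᶠ l : orbitSet N q, algebraMap F E (r l) * hEntry β ρ i (l : Set (ZMod N)) =
      ∑ j ∈ Finset.univ.filter fun j => e (orbitOf N q j) ≠ 0,
        algebraMap F E (e (orbitOf N q j)) * aeval (bpow β j) ρ * bpow β j ^ i := by
  have hcode := hre i hi
  simp only [Pi.sub_apply, map_sub, sub_mul] at hcode
  rw [finsum_sub_distrib (Set.toFinite _) (Set.toFinite _), sub_eq_zero] at hcode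
  rw [hcode, Finset.sum_filter_of_ne fun j _ h => by contrapose! h; simp [h]]
  simp only [hEntry, mul_assoc]
  exact finsum_orbitSet_mul_finsum_mem hm hq _ _

end Decoding

theorem decode_locator_and_fraction_general (q m : ℕ) (hm : 0 < m)
    (F E : Type*) [Field F] [Field E] [Fintype F] [Algebra F E]
    (hF : Fintype.card F = q)
    (β : E) (hβ : orderOf β = q ^ m - 1) (ρ : Polynomial F) (t : ℕ)
    (hρ : ∀ j : ZMod (q ^ m - 1), Polynomial.aeval (bpow β j) ρ ≠ 0)
    (r : ↥(orbitSet (q ^ m - 1) q) → F)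
    (S : Polynomial F)
    (hS : ∀ i < t, algebraMap F E (S.coeff i) =
      ∑ᶠ l : orbitSet (q ^ m - 1) q,
        algebraMap F E (r l) * hEntry β ρ i (l : Set (ZMod (q ^ m - 1))))
    (e : ↥(orbitSet (q ^ m - 1) q) → F) (he : 2 * wdeg e ≤ t)
    (hre : r - e ∈ codeSet F E (q ^ m - 1) q β ρ t)
    (lam om : Polynomial F) (hlam0 : lam.coeff 0 = 1) (hcop : IsCoprime lam om)
    (homdeg : om.degree < lam.degree) (hlamt : 2 * lam.natDegree ≤ t)
    (hkey : (X : Polynomial F) ^ t ∣ lam * S - om) :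
    {l : ↥(orbitSet (q ^ m - 1) q) |
        ∀ j ∈ (l : Set (ZMod (q ^ m - 1))), minpoly F (bpow β j)⁻¹ ∣ lam} =
      {l : ↥(orbitSet (q ^ m - 1) q) | e l ≠ 0} ∧
    algebraMap (Polynomial E) (RatFunc E) (om.map (algebraMap F E)) /
        algebraMap (Polynomial E) (RatFunc E) (lam.map (algebraMap F E)) =
      ∑ᶠ l ∈ {l : ↥(orbitSet (q ^ m - 1) q) | e l ≠ 0},
        RatFunc.C (algebraMap F E (e l)) *
          ∑ᶠ j ∈ (l : Set (ZMod (q ^ m - 1))),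
            algebraMap (Polynomial E) (RatFunc E)
                (Polynomial.C (Polynomial.aeval (bpow β j) ρ)) /
              algebraMap (Polynomial E) (RatFunc E)
                (1 - Polynomial.C (bpow β j) * Polynomial.X) := by
  classical
  have hqm : 1 < q ^ m := Nat.one_lt_pow hm.ne' (hF ▸ Fintype.one_lt_card)
  have : NeZero (q ^ m - 1) := ⟨by omega⟩
  have hqN := ZMod.natCast_pow_eq_one_of_one_le hqm.le
  have hβ0 : β ≠ 0 := by rintro rfl; exact NeZero.ne (q ^ m - 1) (hβ ▸ orderOf_zero E)
  have hb := bpow_injective hβ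
  obtain ⟨hlam, hom⟩ := eq_errorLocator_of_key_equation hb.injOn
    (J := {j | e (orbitOf _ q j) ≠ 0})
    (c := fun j => algebraMap F E (e (orbitOf _ q j)) * aeval (bpow β j) ρ)
    (S := S.map (algebraMap F E)) (lam := lam.map (algebraMap F E))
    (om := om.map (algebraMap F E))
    (fun j hj => mul_ne_zero ((_root_.map_ne_zero _).2 (Finset.mem_filter.1 hj).2) (hρ j))
    (fun i hi => by rw [coeff_map, hS i hi, finsum_mul_hEntry_eq_sum_error hm hqN hre hi])
    (wdeg_eq_card hm hqN e ▸ he) (by simpa using hlam0)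
    (by simpa using hcop.map (mapRingHom (algebraMap F E))) (by simpa using homdeg)
    (by simpa using hlamt) (by simpa using map_dvd (algebraMap F E) hkey)
  refine ⟨Set.ext fun l => ?_, ?_⟩
  · simp only [Set.mem_ofPred_eq, minpoly_inv_dvd_iff_mem hb (fun j => pow_ne_zero _ hβ0) hlam,
      Finset.mem_filter, Finset.mem_univ, true_and]
    exact forall_mem_orbitSet_iff hm hqN (P := fun l => e l ≠ 0) l
  · rw [hlam, hom, algebraMap_errorEvaluator_div_errorLocator, Finset.sum_filter_of_ne,
      finsum_mem_def, Set.indicator_eq_self.2, finsum_orbitSet_mul_finsum_mem hm hqN]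
    · simp only [map_mul, RatFunc.algebraMap_C, mul_div_assoc]
    · exact fun l hl he => hl (by simp [he])
    · exact fun j _ h he => h (by simp [he])

/-- Decoding: if `e` is an error word of degree `≤ t/2` with `r − e ∈ C(ρ,t)`, and
`(λ, ω)` solves the key equation for the syndrome polynomial `S`, then the orbits `l`
whose minimal polynomial `p_l` divides `λ` are exactly those with `e_l ≠ 0`, and
`ω/λ = ∑_{l : e_l ≠ 0} e_l ∑_{j∈l} ρ(β^j)/(1 − β^j x)` in `E(x)`. -/
theorem decode_locator_and_fraction (q m : ℕ) (hm : 0 < m) (hqm : Nat.Coprime q m)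
    (F E : Type*) [Field F] [Field E] [Fintype F] [Fintype E] [Algebra F E]
    (hF : Fintype.card F = q) (hE : Fintype.card E = q ^ m)
    (β : E) (hβ : orderOf β = q ^ m - 1) (ρ : Polynomial F) (t : ℕ) (ht : 0 < t)
    (hρ : ∀ j : ZMod (q ^ m - 1), Polynomial.aeval (bpow β j) ρ ≠ 0)
    (r : ↥(orbitSet (q ^ m - 1) q) → F)
    (S : Polynomial F) (hSdeg : S.degree < t)
    (hS : ∀ i < t, algebraMap F E (S.coeff i) =
      ∑ᶠ l : orbitSet (q ^ m - 1) q,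
        algebraMap F E (r l) * hEntry β ρ i (l : Set (ZMod (q ^ m - 1))))
    (e : ↥(orbitSet (q ^ m - 1) q) → F) (he : 2 * wdeg e ≤ t)
    (hre : r - e ∈ codeSet F E (q ^ m - 1) q β ρ t)
    (lam om : Polynomial F) (hlam0 : lam.coeff 0 = 1) (hcop : IsCoprime lam om)
    (homdeg : om.degree < lam.degree) (hlamt : 2 * lam.natDegree ≤ t)
    (hkey : (X : Polynomial F) ^ t ∣ lam * S - om) :
    {l : ↥(orbitSet (q ^ m - 1) q) |
        ∀ j ∈ (l : Set (ZMod (q ^ m - 1))), minpoly F (bpow β j)⁻¹ ∣ lam} =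
      {l : ↥(orbitSet (q ^ m - 1) q) | e l ≠ 0} ∧
    algebraMap (Polynomial E) (RatFunc E) (om.map (algebraMap F E)) /
        algebraMap (Polynomial E) (RatFunc E) (lam.map (algebraMap F E)) =
      ∑ᶠ l ∈ {l : ↥(orbitSet (q ^ m - 1) q) | e l ≠ 0},
        RatFunc.C (algebraMap F E (e l)) *
          ∑ᶠ j ∈ (l : Set (ZMod (q ^ m - 1))),
            algebraMap (Polynomial E) (RatFunc E)
                (Polynomial.C (Polynomial.aeval (bpow β j) ρ)) /
              algebraMap (Polynomial E) (RatFunc E)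
                (1 - Polynomial.C (bpow β j) * Polynomial.X) :=
  decode_locator_and_fraction_general q m hm F E hF β hβ ρ t hρ r S hS e he hre lam om hlam0 hcop
    homdeg hlamt hkey
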